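/- arXiv:2006.07837 — 5 statements merged into one kernel-verified Lean document; each statement's English description precedes it below -/
import Mathlib

section
/- For any number of voters n, committee size k ≤ n, and number of issues m, the worst-case approximation ratio of the k-sortition rule over preference profiles with m issues equals its worst-case approximation ratio over profiles with a single issue. -/
open Finset BigOperators

noncomputable section

/-- Hamming distance between two preference vectors over `m` binary issues. -/
def hamming {m : ℕ} (x y : Fin m → Bool) : ℕ :=
  (Finset.univ.filter fun j => x j ≠ y j).card

/-- Social cost of outcome `z` on profile `X`: sum of Hamming distances. -/
def SC {n m : ℕ} (X : Fin n → Fin m → Bool) (z : Fin m → Bool) : ℕ :=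
  ∑ i, hamming (X i) z

/-- Optimal (minimal) social cost over all outcomes. -/
def optCost {n m : ℕ} (X : Fin n → Fin m → Bool) : ℕ :=
  Finset.univ.inf' Finset.univ_nonempty fun z : Fin m → Bool => SC X z

/-- Number of voters preferring alternative 1 (`true`) on issue `j`. -/
def trueCount {n m : ℕ} (X : Fin n → Fin m → Bool) (j : Fin m) : ℕ :=
  (Finset.univ.filter fun i => X i j = true).card

/-- Number of voters preferring alternative 0 (`false`) on issue `j`. -/
def falseCount {n m : ℕ} (X : Fin n → Fin m → Bool) (j : Fin m) : ℕ :=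
  (Finset.univ.filter fun i => X i j = false).card

/-- Expected social cost of `k`-sortition: a uniformly random committee of size `k`
decides each issue by simple majority, ties broken uniformly at random. -/
def sortitionCost (k : ℕ) {n m : ℕ} (X : Fin n → Fin m → Bool) : ℝ :=
  (∑ C ∈ Finset.powersetCard k (Finset.univ : Finset (Fin n)), ∑ j : Fin m,
      (if k < 2 * (C.filter fun i => X i j = true).card then (falseCount X j : ℝ)
       else if 2 * (C.filter fun i => X i j = true).card < k then (trueCount X j : ℝ)
       else (n : ℝ) / 2)) / (n.choose k : ℝ)

/-- Ratio of an (expected) cost to the optimal cost, with the convention `0/0 = 1`. -/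
def ratio (cost : ℝ) (opt : ℕ) : ℝ := if opt = 0 then 1 else cost / (opt : ℝ)

/-- Worst-case approximation ratio of `k`-sortition over profiles with `n` voters, `m` issues. -/
def sortitionAR (n m k : ℕ) : ℝ :=
  ⨆ X : Fin n → Fin m → Bool, ratio (sortitionCost k X) (optCost X)

/-- The set of committee members of `C` closest (in Hamming distance) to voter `i`. -/
def closestSet {n m : ℕ} (X : Fin n → Fin m → Bool) (C : Finset (Fin n)) (i : Fin n) :
    Finset (Fin n) :=
  C.filter fun c => ∀ c' ∈ C, hamming (X i) (X c) ≤ hamming (X i) (X c')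

/-- Weight of committee member `c`: each voter splits one unit of weight equally among
their closest committee members. -/
def wWeight {n m : ℕ} (X : Fin n → Fin m → Bool) (C : Finset (Fin n)) (c : Fin n) : ℝ :=
  ∑ i : Fin n, if c ∈ closestSet X C i then 1 / ((closestSet X C i).card : ℝ) else 0

/-- Expected social cost of the decision of committee `C` under weighted majority
(per issue, ties broken uniformly). -/
def wCost {n m : ℕ} (X : Fin n → Fin m → Bool) (C : Finset (Fin n)) : ℝ :=
  ∑ j : Fin m,
    (if (∑ c ∈ C.filter (fun c => X c j = false), wWeight X C c)
          < (∑ c ∈ C.filter (fun c => X c j = true), wWeight X C c)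
        then (falseCount X j : ℝ)
     else if (∑ c ∈ C.filter (fun c => X c j = true), wWeight X C c)
          < (∑ c ∈ C.filter (fun c => X c j = false), wWeight X C c)
        then (trueCount X j : ℝ)
     else (n : ℝ) / 2)

/-- Expected social cost of weighted `k`-sortition: uniformly random committee of size `k`,
weighted majority vote per issue. -/
def wSortitionCost (k : ℕ) {n m : ℕ} (X : Fin n → Fin m → Bool) : ℝ :=
  (∑ C ∈ Finset.powersetCard k (Finset.univ : Finset (Fin n)), wCost X C) / (n.choose k : ℝ)

/-- Worst-case approximation ratio of weighted `k`-sortition. -/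
def wSortitionAR (n m k : ℕ) : ℝ :=
  ⨆ X : Fin n → Fin m → Bool, ratio (wSortitionCost k X) (optCost X)

/-!
Both the optimal cost and the expected cost of sortition are sums over the issues of the
corresponding costs of the single-issue profiles obtained by restricting to one issue. Hence the
cost of a profile is at most the single-issue ratio times its optimum, summed issue by issue; an
issue with optimum zero is unanimous and, as `k ≥ 1`, every committee decides it unanimously too.
Conversely, copying a single-issue profile onto all `m` issues multiplies both costs by `m`.
-/

theorem Finset.inf'_univ_sum_pi {ι α M : Type*} [Fintype ι] [DecidableEq ι] [Fintype α]
    [Nonempty α] [AddCommMonoid M] [LinearOrder M] [IsOrderedAddMonoid M] (f : ι → α → M) :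
    univ.inf' univ_nonempty (fun z : ι → α => ∑ j, f j (z j)) =
      ∑ j, univ.inf' univ_nonempty (f j) := by
  refine le_antisymm ?_ (le_inf' _ _ fun z _ => sum_le_sum fun j _ => inf'_le _ (mem_univ _))
  choose z _ hz using fun j => exists_mem_eq_inf' univ_nonempty (f j)
  exact inf'_le_of_le _ (mem_univ z) (sum_le_sum fun j _ => (hz j).ge)

section Sortition

variable {n m : ℕ}

def disagreeCount (X : Fin n → Fin m → Bool) (j : Fin m) (b : Bool) : ℕ :=
  #{i | X i j ≠ b}

def slice (X : Fin n → Fin m → Bool) (j : Fin m) : Fin n → Fin 1 → Bool :=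
  fun i _ => X i j

def replicateIssue (m : ℕ) (Y : Fin n → Fin 1 → Bool) : Fin n → Fin m → Bool :=
  fun i _ => Y i 0

lemma hamming_eq_zero_iff {x y : Fin m → Bool} : hamming x y = 0 ↔ x = y := by
  simp [hamming, funext_iff]

lemma SC_eq_sum_disagreeCount (X : Fin n → Fin m → Bool) (z : Fin m → Bool) :
    SC X z = ∑ j, disagreeCount X j (z j) := by
  simp only [SC, hamming, disagreeCount, card_filter]
  exact sum_comm

lemma optCost_eq_sum_inf' (X : Fin n → Fin m → Bool) :
    optCost X = ∑ j, univ.inf' univ_nonempty (disagreeCount X j) := by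
  simp only [optCost, SC_eq_sum_disagreeCount]
  exact inf'_univ_sum_pi _

lemma optCost_eq_sum_slice (X : Fin n → Fin m → Bool) :
    optCost X = ∑ j, optCost (slice X j) := by
  simp only [optCost_eq_sum_inf' X, optCost_eq_sum_inf' (slice X _), Fin.sum_univ_one]
  rfl

lemma sortitionCost_eq_sum_slice (k : ℕ) (X : Fin n → Fin m → Bool) :
    sortitionCost k X = ∑ j, sortitionCost k (slice X j) := by
  simp only [sortitionCost, Fin.sum_univ_one]
  rw [sum_comm, sum_div]
  rfl

lemma slice_replicateIssue (Y : Fin n → Fin 1 → Bool) (j : Fin m) :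
    slice (replicateIssue m Y) j = Y := by
  funext i j'
  rw [Subsingleton.elim j' 0]
  rfl

lemma optCost_const (z : Fin m → Bool) : optCost (fun _ : Fin n => z) = 0 :=
  Nat.eq_zero_of_le_zero <| inf'_le_of_le _ (mem_univ z) (by simp [SC, hamming])

lemma exists_eq_const_of_optCost_eq_zero {X : Fin n → Fin m → Bool} (h : optCost X = 0) :
    ∃ z, X = fun _ => z := by
  obtain ⟨z, -, hz⟩ := exists_mem_eq_inf' univ_nonempty fun z => SC X z
  refine ⟨z, funext fun i => hamming_eq_zero_iff.mp ?_⟩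
  have hSC : SC X z = 0 := by rw [← h, optCost, hz]
  exact (sum_eq_zero_iff.mp hSC) i (mem_univ i)

lemma sortitionCost_const {k : ℕ} (hk : 0 < k) (z : Fin m → Bool) :
    sortitionCost k (fun _ : Fin n => z) = 0 := by
  refine div_eq_zero_iff.mpr (Or.inl (sum_eq_zero fun C hC => sum_eq_zero fun j _ => ?_))
  have hCk := (mem_powersetCard.mp hC).2
  cases hz : z j <;> simp [trueCount, falseCount, hz, hCk, hk]

lemma ratio_le_sortitionAR (k : ℕ) (X : Fin n → Fin m → Bool) :
    ratio (sortitionCost k X) (optCost X) ≤ sortitionAR n m k :=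
  le_ciSup (f := fun X : Fin n → Fin m → Bool => ratio (sortitionCost k X) (optCost X))
    (Set.finite_range _).bddAbove X

lemma one_le_sortitionAR (n m k : ℕ) : 1 ≤ sortitionAR n m k := by
  have h := ratio_le_sortitionAR k fun (_ : Fin n) (_ : Fin m) => true
  rwa [ratio, if_pos (optCost_const _)] at h

lemma sortitionCost_le_sortitionAR_mul_optCost {k : ℕ} (hk : 0 < k) (X : Fin n → Fin m → Bool) :
    sortitionCost k X ≤ sortitionAR n m k * optCost X := by
  by_cases h : optCost X = 0
  · obtain ⟨z, rfl⟩ := exists_eq_const_of_optCost_eq_zero h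
    simp [sortitionCost_const hk, optCost_const]
  · have hpos : (0 : ℝ) < optCost X := by exact_mod_cast Nat.pos_of_ne_zero h
    have hr := ratio_le_sortitionAR k X
    rwa [ratio, if_neg h, div_le_iff₀ hpos] at hr

lemma sortitionAR_le_sortitionAR_one {k : ℕ} (hk : 0 < k) :
    sortitionAR n m k ≤ sortitionAR n 1 k := by
  refine ciSup_le fun X => ?_
  by_cases h : optCost X = 0
  · rw [ratio, if_pos h]
    exact one_le_sortitionAR n 1 k
  · have hpos : (0 : ℝ) < optCost X := by exact_mod_cast Nat.pos_of_ne_zero h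
    rw [ratio, if_neg h, div_le_iff₀ hpos]
    calc sortitionCost k X = ∑ j, sortitionCost k (slice X j) := sortitionCost_eq_sum_slice k X
      _ ≤ ∑ j, sortitionAR n 1 k * optCost (slice X j) :=
          sum_le_sum fun j _ => sortitionCost_le_sortitionAR_mul_optCost hk _
      _ = sortitionAR n 1 k * optCost X := by
          rw [← mul_sum, optCost_eq_sum_slice X, Nat.cast_sum]

lemma ratio_mul_mul {c : ℕ} (hc : c ≠ 0) (x : ℝ) (o : ℕ) :
    ratio (c * x) (c * o) = ratio x o := by
  have hc' : (c : ℝ) ≠ 0 := Nat.cast_ne_zero.mpr hc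
  simp only [ratio, mul_eq_zero, hc, false_or, Nat.cast_mul, mul_div_mul_left _ _ hc']

lemma ratio_replicateIssue (k : ℕ) (hm : m ≠ 0) (Y : Fin n → Fin 1 → Bool) :
    ratio (sortitionCost k (replicateIssue m Y)) (optCost (replicateIssue m Y)) =
      ratio (sortitionCost k Y) (optCost Y) := by
  rw [sortitionCost_eq_sum_slice, optCost_eq_sum_slice]
  simp only [slice_replicateIssue, sum_const, card_univ, Fintype.card_fin, nsmul_eq_mul,
    smul_eq_mul]
  exact ratio_mul_mul hm _ _

lemma sortitionAR_one_le_sortitionAR (k : ℕ) (hm : m ≠ 0) :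
    sortitionAR n 1 k ≤ sortitionAR n m k :=
  ciSup_le fun Y => ratio_replicateIssue k hm Y ▸ ratio_le_sortitionAR k _

end Sortition

theorem stmt0_general (n m k : ℕ) (hm : 1 ≤ m) (hk : 1 ≤ k) :
    sortitionAR n m k = sortitionAR n 1 k :=
  le_antisymm (sortitionAR_le_sortitionAR_one hk)
    (sortitionAR_one_le_sortitionAR k (Nat.one_le_iff_ne_zero.mp hm))

theorem stmt0 (n m k : ℕ) (hn : 1 ≤ n) (hm : 1 ≤ m) (hk : 1 ≤ k) (hkn : k ≤ n) :
    sortitionAR n m k = sortitionAR n 1 k :=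
  stmt0_general n m k hm hk
end
end

section
/- In a one-issue election with n voters of which n₁ (1 ≤ n₁ ≤ n/2) prefer alternative 1 and the rest prefer alternative 0, the random dictator rule (pick a uniformly random voter and output their preference) has expected social cost equal to (2 − 2n₁/n) times the optimal social cost n₁; consequently its worst-case approximation ratio over all one-issue profiles with n voters equals 2 − 2/n. -/
/-!
On a single issue with `t` voters for 1 and `f` for 0, dictator `i` costs the size of the camp
opposing `i`, so the random dictator costs `(t * f + f * t) / n`, while the optimum is `min t f`.
Their ratio is `2 * max t f / n`, largest when the minority is a single voter: `2 (n - 1) / n`.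
-/

open Finset BigOperators

noncomputable section

/-- Expected social cost of the random dictator rule. -/
def rdCost {n m : ℕ} (X : Fin n → Fin m → Bool) : ℝ :=
  (∑ i : Fin n, (SC X (X i) : ℝ)) / n

/-- Worst-case approximation ratio of the random dictator rule. -/
def rdAR (n m : ℕ) : ℝ :=
  ⨆ X : Fin n → Fin m → Bool, ratio (rdCost X) (optCost X)

lemma hamming_eq_sum {m : ℕ} (x y : Fin m → Bool) :
    hamming x y = ∑ j, if x j ≠ y j then 1 else 0 :=
  card_filter _ _

lemma trueCount_add_falseCount {n m : ℕ} (X : Fin n → Fin m → Bool) (j : Fin m) :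
    trueCount X j + falseCount X j = n := by
  simpa [trueCount, falseCount, Bool.not_eq_true] using
    card_filter_add_card_filter_not (s := (univ : Finset (Fin n))) (fun i => X i j = true)

lemma SC_eq_sum {n m : ℕ} (X : Fin n → Fin m → Bool) (z : Fin m → Bool) :
    SC X z = ∑ j, if z j then falseCount X j else trueCount X j := by
  simp only [SC, hamming_eq_sum]
  rw [sum_comm]
  refine sum_congr rfl fun j _ => ?_
  rw [trueCount, falseCount, card_filter, card_filter]
  cases z j <;> exact sum_congr rfl fun i _ => by cases X i j <;> rfl

lemma optCost_eq_sum_min {n m : ℕ} (X : Fin n → Fin m → Bool) :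
    optCost X = ∑ j, min (trueCount X j) (falseCount X j) := by
  refine le_antisymm ?_ (le_inf' _ _ fun z _ => ?_)
  · calc optCost X ≤ SC X (fun j => decide (falseCount X j < trueCount X j)) :=
          inf'_le _ (mem_univ _)
      _ = ∑ j, min (trueCount X j) (falseCount X j) := by
        rw [SC_eq_sum]
        refine sum_congr rfl fun j _ => ?_
        by_cases h : falseCount X j < trueCount X j
        · simp [h, min_eq_right h.le]
        · simp [h, min_eq_left (not_lt.mp h)]
  · rw [SC_eq_sum]
    exact sum_le_sum fun j _ => by split_ifs <;> simp

lemma sum_SC_self_eq {n m : ℕ} (X : Fin n → Fin m → Bool) :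
    ∑ i, SC X (X i) = ∑ j, 2 * trueCount X j * falseCount X j := by
  simp only [SC_eq_sum]
  rw [sum_comm]
  refine sum_congr rfl fun j _ => ?_
  rw [sum_ite, sum_const, sum_const, smul_eq_mul, smul_eq_mul]
  simp only [Bool.not_eq_true]
  rw [← trueCount, ← falseCount]
  ring

lemma rdCost_eq_sum {n m : ℕ} (X : Fin n → Fin m → Bool) :
    rdCost X = (∑ j, 2 * (trueCount X j : ℝ) * falseCount X j) / n := by
  rw [rdCost, ← Nat.cast_sum, sum_SC_self_eq]
  push_cast
  rfl

lemma rdCost_fin_one {n : ℕ} (X : Fin n → Fin 1 → Bool) :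
    rdCost X = 2 * (trueCount X 0 : ℝ) * falseCount X 0 / n := by
  rw [rdCost_eq_sum, Fin.sum_univ_one]

lemma optCost_fin_one {n : ℕ} (X : Fin n → Fin 1 → Bool) :
    optCost X = min (trueCount X 0) (falseCount X 0) := by
  rw [optCost_eq_sum_min, Fin.sum_univ_one]

lemma rdCost_fin_one_of_trueCount {n : ℕ} (X : Fin n → Fin 1 → Bool) {n₁ : ℕ}
    (h : trueCount X 0 = n₁) (hn₁ : n₁ ≤ n) :
    rdCost X = (2 - 2 * (n₁ : ℝ) / n) * n₁ := by
  have hf : (falseCount X 0 : ℝ) = n - n₁ := by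
    rw [eq_sub_iff_add_eq, ← h]
    exact_mod_cast (add_comm _ _).trans (trueCount_add_falseCount X 0)
  rw [rdCost_fin_one, h, hf]
  rcases (Nat.zero_le n).eq_or_lt with rfl | hn
  · obtain rfl : n₁ = 0 := by omega
    simp
  · field_simp

lemma two_mul_mul_div_add_le {a b : ℝ} (ha : 1 ≤ a) (hab : a ≤ b) :
    2 * a * b / (a + b) ≤ (2 - 2 / (a + b)) * a := by
  have hpos : 0 < a + b := by linarith
  have hrhs : (2 - 2 / (a + b)) * a * (a + b) = 2 * a * (a + b) - 2 * a := by
    field_simp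
  rw [div_le_iff₀ hpos, hrhs]
  nlinarith

lemma ratio_rdCost_fin_one_le {n : ℕ} (hn : 2 ≤ n) (X : Fin n → Fin 1 → Bool) :
    ratio (rdCost X) (optCost X) ≤ 2 - 2 / n := by
  have hn' : (2 : ℝ) ≤ n := by exact_mod_cast hn
  have hsum : (trueCount X 0 : ℝ) + falseCount X 0 = n := by
    exact_mod_cast trueCount_add_falseCount X 0
  rw [ratio, optCost_fin_one, rdCost_fin_one]
  split_ifs with h0
  · rw [le_sub_iff_add_le, ← le_sub_iff_add_le', div_le_iff₀ (by linarith)]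
    linarith
  rw [div_le_iff₀ (by positivity), ← hsum]
  have h1 : 1 ≤ min (trueCount X 0) (falseCount X 0) := Nat.one_le_iff_ne_zero.mpr h0
  rcases le_total (trueCount X 0) (falseCount X 0) with h | h
  · rw [min_eq_left h] at h1 ⊢
    exact two_mul_mul_div_add_le (by exact_mod_cast h1) (by exact_mod_cast h)
  · rw [min_eq_right h] at h1 ⊢
    rw [mul_right_comm, add_comm]
    exact two_mul_mul_div_add_le (by exact_mod_cast h1) (by exact_mod_cast h)

lemma trueCount_decide_eq_zero {n : ℕ} [NeZero n] :
    trueCount (fun i _ => decide (i = 0) : Fin n → Fin 1 → Bool) 0 = 1 := by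
  simp [trueCount, filter_eq']

theorem stmt1 (n : ℕ) (hn : 2 ≤ n) :
    (∀ (X : Fin n → Fin 1 → Bool) (n₁ : ℕ), n₁ = trueCount X 0 → 1 ≤ n₁ → 2 * n₁ ≤ n →
      rdCost X = (2 - 2 * (n₁ : ℝ) / n) * n₁ ∧ optCost X = n₁) ∧
    rdAR n 1 = 2 - 2 / n := by
  have minority_cost : ∀ (X : Fin n → Fin 1 → Bool) (n₁ : ℕ), n₁ = trueCount X 0 → 2 * n₁ ≤ n →
      rdCost X = (2 - 2 * (n₁ : ℝ) / n) * n₁ ∧ optCost X = n₁ := by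
    intro X n₁ h₁ hle
    have hsum := trueCount_add_falseCount X 0
    exact ⟨rdCost_fin_one_of_trueCount X h₁.symm (by omega),
      by rw [optCost_fin_one, ← h₁, min_eq_left (by omega)]⟩
  refine ⟨fun X n₁ h₁ _ hle => minority_cost X n₁ h₁ hle, ?_⟩
  have : NeZero n := ⟨by omega⟩
  set X₀ : Fin n → Fin 1 → Bool := fun i _ => decide (i = 0)
  obtain ⟨hcost, hopt⟩ := minority_cost X₀ 1 trueCount_decide_eq_zero.symm (by omega)
  have hX₀ : ratio (rdCost X₀) (optCost X₀) = 2 - 2 / n := by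
    rw [ratio, hopt, if_neg one_ne_zero, hcost]
    simp
  refine le_antisymm (ciSup_le (ratio_rdCost_fin_one_le hn)) (hX₀ ▸ ?_)
  exact le_ciSup (f := fun X => ratio (rdCost X) (optCost X)) (Set.finite_range _).bddAbove X₀

end
end

section
/- Let ξ be the number of supporters of alternative 1 in a uniformly random committee of size 3 drawn without replacement from n voters, n₁ = pn of whom support alternative 1 with p ≤ 1/2. Then P(ξ ≥ 2) = p(p − 1/n)(3 − 2p − 2/n) / ((1 − 1/n)(1 − 2/n)) ≤ p²(3 − 2p). -/
open Finset BigOperators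

noncomputable section

theorem stmt3 (n n₁ : ℕ) (hn : 3 ≤ n) (h2 : 2 * n₁ ≤ n) (p : ℝ) (hp : p = (n₁ : ℝ) / n) :
    ((n₁.choose 3 + n₁.choose 2 * (n - n₁) : ℕ) : ℝ) / (n.choose 3 : ℝ)
        = p * (p - 1 / n) * (3 - 2 * p - 2 / n) / ((1 - 1 / n) * (1 - 2 / n)) ∧
    ((n₁.choose 3 + n₁.choose 2 * (n - n₁) : ℕ) : ℝ) / (n.choose 3 : ℝ)
        ≤ p ^ 2 * (3 - 2 * p) := by
  have hn1 : n₁ ≤ n := by omega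
  have hc2 : ∀ N : ℕ, (N.choose 2 : ℝ) * 2 = N * (N - 1) := by
    intro N
    induction N with
    | zero => simp
    | succ k ih =>
      rw [Nat.choose_succ_succ, Nat.choose_one_right]
      push_cast
      push_cast at ih
      ring_nf
      ring_nf at ih
      linarith
  have hc3 : ∀ N : ℕ, (N.choose 3 : ℝ) * 6 = N * (N - 1) * (N - 2) := by
    intro N
    induction N with
    | zero => simp
    | succ k ih =>
      rw [Nat.choose_succ_succ]
      push_cast
      push_cast at ih
      have h2 := hc2 k
      nlinarith [h2, ih]
  have hnum : ((n₁.choose 3 + n₁.choose 2 * (n - n₁) : ℕ) : ℝ)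
      = (n₁ : ℝ) * ((n₁ : ℝ) - 1) * ((n₁ : ℝ) - 2) / 6
        + (n₁ : ℝ) * ((n₁ : ℝ) - 1) / 2 * ((n : ℝ) - (n₁ : ℝ)) := by
    push_cast [Nat.cast_sub hn1]
    have h2 := hc2 n₁
    have h3 := hc3 n₁
    nlinarith [h2, h3]
  have hden : ((n.choose 3 : ℕ) : ℝ) = (n : ℝ) * ((n : ℝ) - 1) * ((n : ℝ) - 2) / 6 := by
    have h3 := hc3 n
    linarith
  have hnR : (3 : ℝ) ≤ (n : ℝ) := by exact_mod_cast hn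
  have hn0 : (n : ℝ) ≠ 0 := by positivity
  have hn1pos : (0 : ℝ) < (n : ℝ) - 1 := by linarith
  have hn2pos : (0 : ℝ) < (n : ℝ) - 2 := by linarith
  have hnpos : (0 : ℝ) < (n : ℝ) := by linarith
  have haR : (0 : ℝ) ≤ (n₁ : ℝ) := by positivity
  have h2aR : 2 * (n₁ : ℝ) ≤ (n : ℝ) := by exact_mod_cast h2
  have key : ((n₁.choose 3 + n₁.choose 2 * (n - n₁) : ℕ) : ℝ) / (n.choose 3 : ℝ)
      = p * (p - 1 / n) * (3 - 2 * p - 2 / n) / ((1 - 1 / n) * (1 - 2 / n)) := by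
    rw [hnum, hden, hp]
    have d1 : (1 : ℝ) - 1 / n ≠ 0 := by
      rw [sub_ne_zero]
      intro h
      have : (n : ℝ) = 1 := by field_simp at h; linarith
      linarith
    have d2 : (1 : ℝ) - 2 / n ≠ 0 := by
      rw [sub_ne_zero]
      intro h
      have : (n : ℝ) = 2 := by field_simp at h; linarith
      linarith
    field_simp
    ring
  refine ⟨key, ?_⟩
  rw [key, hp]
  have d1 : (0 : ℝ) < 1 - 1 / n := by
    rw [sub_pos, div_lt_one hnpos]; linarith
  have d2 : (0 : ℝ) < 1 - 2 / n := by
    rw [sub_pos, div_lt_one hnpos]; linarith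
  rw [div_le_iff₀ (by positivity)]
  have hfac : (0 : ℝ) ≤ (n₁ : ℝ) * (3 * n - 2) * ((n : ℝ) - n₁) * ((n : ℝ) - 2 * n₁) := by
    have h1 : (0 : ℝ) ≤ 3 * (n : ℝ) - 2 := by linarith
    have h2' : (0 : ℝ) ≤ (n : ℝ) - n₁ := by linarith
    have h3' : (0 : ℝ) ≤ (n : ℝ) - 2 * n₁ := by linarith
    positivity
  have expand : ((n₁ : ℝ) / n) ^ 2 * (3 - 2 * ((n₁ : ℝ) / n)) * ((1 - 1 / n) * (1 - 2 / n))
      - (n₁ : ℝ) / n * ((n₁ : ℝ) / n - 1 / n) * (3 - 2 * ((n₁ : ℝ) / n) - 2 / n)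
      = (n₁ : ℝ) * (3 * n - 2) * ((n : ℝ) - n₁) * ((n : ℝ) - 2 * n₁) / (n : ℝ) ^ 5 := by
    field_simp
    ring
  have hdiv : (0 : ℝ) ≤ (n₁ : ℝ) * (3 * n - 2) * ((n : ℝ) - n₁) * ((n : ℝ) - 2 * n₁) / (n : ℝ) ^ 5 :=
    div_nonneg hfac (by positivity)
  linarith [expand, hdiv]

end
end

section
/- For a hypergeometric random variable ξ with parameters (n, pn, k) with 1/6 ≤ p ≤ 1/2, the quantity 1 + P(ξ ≥ k/2)·(1−2p)/p is at most 1 + 6·exp(−1/2)/√k. -/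
open Finset BigOperators

noncomputable section

/-- Tail probability `P(ξ ≥ t)` for a hypergeometric random variable `ξ` with
parameters `(n, n₁, k)` (number of red balls among `k` draws without replacement
from an urn with `n₁` red balls out of `n`). -/
def hyperTail (n n₁ k : ℕ) (t : ℝ) : ℝ :=
  ∑ q ∈ Finset.range (k + 1), if t ≤ (q : ℝ) then
    ((n₁.choose q * (n - n₁).choose (k - q) : ℕ) : ℝ) / (n.choose k : ℝ) else 0

/-! Write `T = P(ξ ≥ k/2)` and `p = n₁/n`. Markov's inequality gives `T ≤ 2p`, and Chebyshev's
inequality, with the hypergeometric variance bounded by the binomial one `kp(1-p)`, gives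
`k (1/2 - p)² T ≤ p(1-p)`. Multiplying the two, `k (T(1-2p)/p)² ≤ 8(1-p) ≤ 20/3 < 36/e`, which is
the claim. The first two moments of `ξ` come from the factorial-moment identity
`C(n, j) E[C(ξ, j)] = C(n₁, j) C(k, j)`. -/

namespace Nat

theorem sum_range_choose_mul_choose (a b m : ℕ) :
    ∑ q ∈ range (m + 1), a.choose q * b.choose (m - q) = (a + b).choose m := by
  rw [add_choose_eq, Finset.Nat.sum_antidiagonal_eq_sum_range_succ_mk]

theorem sum_range_choose_mul_choose_mul_choose (a b j m : ℕ) :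
    ∑ q ∈ range (j + m + 1), q.choose j * (a.choose q * b.choose (j + m - q))
      = a.choose j * (a - j + b).choose m := by
  rw [add_assoc, sum_range_add, sum_eq_zero fun q hq => by
    rw [choose_eq_zero_of_lt (mem_range.1 hq), zero_mul], zero_add,
    ← sum_range_choose_mul_choose, mul_sum]
  refine sum_congr rfl fun r _ => ?_
  rw [← mul_assoc, mul_comm ((j + r).choose j), choose_mul (le_add_right j r),
    add_tsub_cancel_left, Nat.add_sub_add_left, mul_assoc]

theorem choose_mul_sum_range_choose_mul_choose_mul_choose (a b j k : ℕ) :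
    (a + b).choose j * ∑ q ∈ range (k + 1), q.choose j * (a.choose q * b.choose (k - q))
      = a.choose j * k.choose j * (a + b).choose k := by
  rcases lt_or_ge k j with hkj | hjk
  · rw [choose_eq_zero_of_lt hkj, sum_eq_zero fun q hq => by
      rw [choose_eq_zero_of_lt ((mem_range_succ_iff.1 hq).trans_lt hkj), zero_mul]]
    simp
  obtain ⟨m, rfl⟩ := exists_add_of_le hjk
  rw [sum_range_choose_mul_choose_mul_choose]
  rcases le_or_gt j a with hja | haj
  · rw [mul_left_comm, mul_assoc, mul_comm ((j + m).choose j), choose_mul (le_add_right j m),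
      add_tsub_cancel_left, tsub_add_eq_add_tsub hja]
  · simp [choose_eq_zero_of_lt haj]

end Nat

theorem Finset.mul_sum_ite_le_sum_mul {ι R : Type*} [Semiring R] [PartialOrder R]
    [IsOrderedRing R] (s : Finset ι) (P : ι → Prop) [DecidablePred P] (w g : ι → R) (c : R)
    (hw : ∀ i ∈ s, 0 ≤ w i) (hg : ∀ i ∈ s, 0 ≤ g i) (hc : ∀ i ∈ s, P i → c ≤ g i) :
    c * ∑ i ∈ s, (if P i then w i else 0) ≤ ∑ i ∈ s, g i * w i := by
  rw [mul_sum]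
  refine sum_le_sum fun i hi => ?_
  split_ifs with h
  · exact mul_le_mul_of_nonneg_right (hc i hi h) (hw i hi)
  · rw [mul_zero]
    exact mul_nonneg (hg i hi) (hw i hi)

def hyperProb (n n₁ k q : ℕ) : ℝ :=
  ((n₁.choose q * (n - n₁).choose (k - q) : ℕ) : ℝ) / (n.choose k : ℝ)

section Hypergeometric

variable {n n₁ k : ℕ}

theorem hyperProb_nonneg (q : ℕ) : 0 ≤ hyperProb n n₁ k q := by
  unfold hyperProb; positivity

theorem hyperTail_eq_sum_ite (t : ℝ) :
    hyperTail n n₁ k t = ∑ q ∈ range (k + 1), if t ≤ q then hyperProb n n₁ k q else 0 :=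
  rfl

theorem hyperTail_nonneg (t : ℝ) : 0 ≤ hyperTail n n₁ k t :=
  sum_nonneg fun q _ => by split_ifs <;> [exact hyperProb_nonneg q; rfl]

theorem choose_mul_sum_choose_mul_hyperProb (hn₁ : n₁ ≤ n) (hkn : k ≤ n) (j : ℕ) :
    (n.choose j : ℝ) * ∑ q ∈ range (k + 1), (q.choose j : ℝ) * hyperProb n n₁ k q
      = n₁.choose j * k.choose j := by
  have hW : (n.choose k : ℝ) ≠ 0 := by exact_mod_cast (Nat.choose_pos hkn).ne'
  have h := Nat.choose_mul_sum_range_choose_mul_choose_mul_choose n₁ (n - n₁) j k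
  rw [Nat.add_sub_cancel' hn₁] at h
  simp only [hyperProb, mul_div_assoc', ← sum_div, div_eq_iff hW]
  exact_mod_cast h

theorem sum_hyperProb (hn₁ : n₁ ≤ n) (hkn : k ≤ n) :
    ∑ q ∈ range (k + 1), hyperProb n n₁ k q = 1 := by
  simpa using choose_mul_sum_choose_mul_hyperProb hn₁ hkn 0

theorem sum_mul_hyperProb (hn₁ : n₁ ≤ n) (hkn : k ≤ n) (hn : 0 < n) :
    ∑ q ∈ range (k + 1), (q : ℝ) * hyperProb n n₁ k q = k * (n₁ / n) := by
  have h := choose_mul_sum_choose_mul_hyperProb hn₁ hkn 1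
  simp only [Nat.choose_one_right] at h
  rw [mul_div_assoc', eq_div_iff (by positivity), mul_comm, h, mul_comm]

theorem sum_mul_sub_one_mul_hyperProb (hn₁ : n₁ ≤ n) (hkn : k ≤ n) :
    (n : ℝ) * (n - 1) * ∑ q ∈ range (k + 1), (q : ℝ) * (q - 1) * hyperProb n n₁ k q
      = n₁ * (n₁ - 1) * (k * (k - 1)) := by
  have h := choose_mul_sum_choose_mul_hyperProb hn₁ hkn 2
  simp only [Nat.cast_choose_two, div_mul_eq_mul_div, ← sum_div] at h
  linarith

theorem sum_sq_sub_mul_hyperProb_le (hn₁ : n₁ ≤ n) (hkn : k ≤ n) (hn : 2 ≤ n) :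
    ∑ q ∈ range (k + 1), ((q : ℝ) - k * (n₁ / n)) ^ 2 * hyperProb n n₁ k q
      ≤ k * (n₁ / n) * (1 - n₁ / n) := by
  set p : ℝ := n₁ / n
  have hn' : (2 : ℝ) ≤ n := by exact_mod_cast hn
  have hn₁' : (n₁ : ℝ) ≤ n := by exact_mod_cast hn₁
  have hk : (0 : ℝ) ≤ k * (k - 1) := by
    rcases k.eq_zero_or_pos with rfl | hk
    · simp
    · have : (1 : ℝ) ≤ k := by exact_mod_cast hk
      nlinarith
  have hS2 :
      ∑ q ∈ range (k + 1), (q : ℝ) * (q - 1) * hyperProb n n₁ k q ≤ k * (k - 1) * p ^ 2 := by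
    -- `n₁ (n₁ - 1) / (n (n - 1)) ≤ (n₁ / n) ^ 2` because `n₁ ≤ n`
    refine le_of_mul_le_mul_left ?_ (by nlinarith : (0 : ℝ) < n * (n - 1))
    rw [sum_mul_sub_one_mul_hyperProb hn₁ hkn]
    have : (n : ℝ) * (n - 1) * (k * (k - 1) * p ^ 2) - n₁ * (n₁ - 1) * (k * (k - 1))
        = k * (k - 1) * p * (n - n₁) := by
      simp only [p]; field_simp; ring
    nlinarith [mul_nonneg (mul_nonneg hk (by positivity : 0 ≤ p)) (sub_nonneg.2 hn₁')]
  have hexpand : ∑ q ∈ range (k + 1), ((q : ℝ) - k * p) ^ 2 * hyperProb n n₁ k q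
      = ∑ q ∈ range (k + 1), (q : ℝ) * (q - 1) * hyperProb n n₁ k q
        + (1 - 2 * (k * p)) * ∑ q ∈ range (k + 1), (q : ℝ) * hyperProb n n₁ k q
        + (k * p) ^ 2 * ∑ q ∈ range (k + 1), hyperProb n n₁ k q := by
    simp only [mul_sum, ← sum_add_distrib]
    exact sum_congr rfl fun q _ => by ring
  rw [hexpand, sum_mul_hyperProb hn₁ hkn (by omega), sum_hyperProb hn₁ hkn]
  nlinarith

theorem mul_hyperTail_le (hn₁ : n₁ ≤ n) (hkn : k ≤ n) (hn : 0 < n) (t : ℝ) :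
    t * hyperTail n n₁ k t ≤ k * (n₁ / n) := by
  rw [hyperTail_eq_sum_ite, ← sum_mul_hyperProb hn₁ hkn hn]
  exact Finset.mul_sum_ite_le_sum_mul _ _ _ _ _ (fun q _ => hyperProb_nonneg q)
    (fun q _ => q.cast_nonneg) fun _ _ h => h

theorem sq_mul_hyperTail_le (hn₁ : n₁ ≤ n) (hkn : k ≤ n) (hn : 2 ≤ n) {t : ℝ}
    (ht : k * (n₁ / n) ≤ t) :
    (t - k * (n₁ / n)) ^ 2 * hyperTail n n₁ k t ≤ k * (n₁ / n) * (1 - n₁ / n) := by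
  rw [hyperTail_eq_sum_ite]
  refine le_trans ?_ (sum_sq_sub_mul_hyperProb_le hn₁ hkn hn)
  exact Finset.mul_sum_ite_le_sum_mul _ _ _ _ _ (fun q _ => hyperProb_nonneg q)
    (fun q _ => sq_nonneg _) fun q _ h => pow_le_pow_left₀ (sub_nonneg.2 ht) (by linarith) 2

end Hypergeometric

theorem mul_sq_le_of_markov_of_chebyshev {k p T : ℝ} (hk : 0 < k) (hp : 1 / 6 ≤ p) (hT : 0 ≤ T)
    (hMarkov : k / 2 * T ≤ k * p) (hCheb : (k / 2 - k * p) ^ 2 * T ≤ k * p * (1 - p)) :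
    k * (T * (1 - 2 * p) / p) ^ 2 ≤ 20 / 3 := by
  have hp0 : 0 < p := by linarith
  have hT2 : T ≤ 2 * p := le_of_mul_le_mul_left (by linarith) (by positivity : 0 < k / 2)
  have hvar : 0 ≤ p * (1 - p) :=
    nonneg_of_mul_nonneg_right (by nlinarith [sq_nonneg (k / 2 - k * p)]) hk
  have hsq : k * (T * (1 - 2 * p)) ^ 2 ≤ 4 * T * (p * (1 - p)) := by
    refine le_of_mul_le_mul_left ?_ hk
    nlinarith [mul_le_mul_of_nonneg_left hCheb hT]
  calc k * (T * (1 - 2 * p) / p) ^ 2 = k * (T * (1 - 2 * p)) ^ 2 / p ^ 2 := by ring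
    _ ≤ 4 * (2 * p) * (p * (1 - p)) / p ^ 2 :=
      div_le_div_of_nonneg_right (hsq.trans (by gcongr)) (sq_nonneg p)
    _ = 8 * (1 - p) := by field_simp; ring
    _ ≤ 20 / 3 := by linarith

theorem le_six_mul_exp_neg_half_div_sqrt {k x : ℝ} (hk : 0 < k) (hx : k * x ^ 2 ≤ 20 / 3) :
    x ≤ 6 * Real.exp (-(1 / 2)) / √k := by
  have he : Real.exp 1 < 2.72 := Real.exp_one_lt_d9.trans (by norm_num)
  have hsq : (6 * Real.exp (-(1 / 2)) / √k) ^ 2 = 36 / (Real.exp 1 * k) := by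
    rw [div_pow, mul_pow, ← Real.exp_nat_mul, Real.sq_sqrt hk.le]
    norm_num [Real.exp_neg]
    field_simp
  refine (le_abs_self x).trans (abs_le_of_sq_le_sq ?_ (by positivity))
  rw [hsq, le_div_iff₀ (by positivity)]
  nlinarith [Real.exp_pos 1]

theorem stmt7 (n n₁ k : ℕ) (hk : 1 ≤ k) (hkn : k ≤ n) (h1 : n ≤ 6 * n₁) (h2 : 2 * n₁ ≤ n)
    (p : ℝ) (hp : p = (n₁ : ℝ) / n) :
    1 + hyperTail n n₁ k ((k : ℝ) / 2) * (1 - 2 * p) / p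
      ≤ 1 + 6 * Real.exp (-(1 / 2)) / Real.sqrt k := by
  have hn : (0 : ℝ) < n := by exact_mod_cast hk.trans hkn
  have hk' : (0 : ℝ) < k := by exact_mod_cast hk
  have h1' : (n : ℝ) ≤ 6 * n₁ := by exact_mod_cast h1
  have h2' : 2 * (n₁ : ℝ) ≤ n := by exact_mod_cast h2
  have hp6 : 1 / 6 ≤ p := by rw [hp, le_div_iff₀ hn]; linarith
  have hp2 : p ≤ 1 / 2 := by rw [hp, div_le_iff₀ hn]; linarith
  have hn₁ : n₁ ≤ n := by omega
  have hMarkov := mul_hyperTail_le hn₁ hkn (by omega) ((k : ℝ) / 2)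
  have hCheb := sq_mul_hyperTail_le hn₁ hkn (by omega) (t := (k : ℝ) / 2)
    (by rw [← hp]; nlinarith)
  rw [← hp] at hMarkov hCheb
  gcongr 1 + ?_
  exact le_six_mul_exp_neg_half_div_sqrt hk'
    (mul_sq_le_of_markov_of_chebyshev hk' hp6 (hyperTail_nonneg _) hMarkov hCheb)

end
end

section
/- For any n ≥ 2 and any n₁ ≤ n, there exists a preference profile with n voters and m = n! issues such that on every issue exactly n₁ voters prefer alternative 1, and every pair of distinct voters is at Hamming distance exactly 2p(1−p)·m/(1 − 1/n), where p = n₁/n. -/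
open Finset BigOperators

noncomputable section

/-!
Index the issues by the permutations `σ` of the voters and fix `A` with `|A| = n₁`; voter `i`
prefers alternative 1 on issue `σ` iff `σ i ∈ A`, so every issue has `n₁` supporters. Voters
`i ≠ i'` disagree on `σ` iff `(σ i, σ i')` separates `A` from its complement. Since `Perm (Fin n)`
acts transitively on the `n (n - 1)` ordered pairs of distinct points, every such pair is
`(σ i, σ i')` for the same number `n! / (n (n - 1))` of permutations, and `2 n₁ (n - n₁)` of
these pairs are separating.
-/

open Finset Equiv

section OrbitCounting

variable {G β : Type*} [Group G] [Fintype G] [MulAction G β] [DecidableEq β]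

theorem MulAction.card_filter_smul_eq_smul (x : β) (h : G) :
    #{g : G | g • x = h • x} = #{g : G | g • x = x} :=
  card_equiv (Equiv.mulLeft h⁻¹) fun g => by simp [mul_smul, inv_smul_eq_iff]

theorem MulAction.card_filter_smul_mul_card_image (x : β) (P : β → Prop) [DecidablePred P] :
    #{g : G | P (g • x)} * #(univ.image (· • x : G → β)) =
      Fintype.card G * #{y ∈ univ.image (· • x : G → β) | P y} := by
  set O := univ.image (· • x : G → β)
  have fiber : ∀ y ∈ O, #{g : G | g • x = y} = #{g : G | g • x = x} := by
    simp only [O, mem_image, mem_univ, true_and]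
    rintro _ ⟨h, rfl⟩
    exact card_filter_smul_eq_smul x h
  have hP : #{g : G | P (g • x)} = #{y ∈ O | P y} * #{g : G | g • x = x} := by
    rw [card_eq_sum_card_fiberwise (f := (· • x)) (t := {y ∈ O | P y}) (by
      intro g hg; simp_all [O]), ← smul_eq_mul, ← sum_const]
    refine sum_congr rfl fun y hy => ?_
    rw [mem_filter] at hy
    rw [← fiber y hy.1, filter_filter]
    congr 1
    exact filter_congr fun g _ => ⟨fun h => h.2, fun h => ⟨h ▸ hy.2, h⟩⟩
  have hG : Fintype.card G = #O * #{g : G | g • x = x} := by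
    rw [← card_univ, card_eq_sum_card_image (· • x) univ, ← smul_eq_mul, ← sum_const]
    exact sum_congr rfl fiber
  rw [hP, hG]
  ring

end OrbitCounting

section PermCounting

variable {α : Type*} [Fintype α]

theorem card_filter_perm_apply (σ : Perm α) (c : α → Bool) :
    #{i | c (σ i) = true} = #{a | c a = true} :=
  card_equiv σ fun i => by simp

variable [DecidableEq α]

theorem Equiv.Perm.image_smul_pair_eq_offDiag {i i' : α} (h : i ≠ i') :
    univ.image (· • (i, i') : Perm α → α × α) = univ.offDiag := by
  ext ⟨a, b⟩
  simp only [mem_image, mem_univ, true_and, mem_offDiag, Prod.smul_mk, Perm.smul_def,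
    Prod.mk.injEq]
  constructor
  · rintro ⟨σ, rfl, rfl⟩
    exact σ.injective.ne h
  · intro hab
    exact MulAction.is_two_pretransitive_iff.mp (Perm.isMultiplyPretransitive α 2) h hab

theorem card_filter_offDiag_ne (c : α → Bool) :
    #{y ∈ (univ : Finset α).offDiag | c y.1 ≠ c y.2} =
      2 * #{a | c a = true} * #{a | c a = false} := by
  set T : Finset α := {a | c a = true}
  set F : Finset α := {a | c a = false}
  have split : {y ∈ (univ : Finset α).offDiag | c y.1 ≠ c y.2} = T ×ˢ F ∪ F ×ˢ T := by
    ext ⟨a, b⟩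
    simp only [T, F, mem_filter, mem_offDiag, mem_univ, true_and, mem_union, mem_product]
    constructor
    · rintro ⟨-, h⟩
      cases ha : c a <;> cases hb : c b <;> simp_all
    · rintro (⟨ha, hb⟩ | ⟨ha, hb⟩) <;> exact ⟨fun hab => by simp_all, by simp [ha, hb]⟩
  have disj : Disjoint (T ×ˢ F) (F ×ˢ T) :=
    disjoint_product.mpr (Or.inl (disjoint_filter.mpr fun a _ h => by simp [h]))
  rw [split, card_union_of_disjoint disj, card_product, card_product]
  ring

theorem Equiv.Perm.card_filter_ne_mul {i i' : α} (h : i ≠ i') (c : α → Bool) :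
    #{σ : Perm α | c (σ i) ≠ c (σ i')} * (Fintype.card α * Fintype.card α - Fintype.card α) =
      (Fintype.card α).factorial * (2 * #{a | c a = true} * #{a | c a = false}) := by
  have orbit_count := MulAction.card_filter_smul_mul_card_image (G := Perm α) (i, i')
    (fun y => c y.1 ≠ c y.2)
  rwa [image_smul_pair_eq_offDiag h, card_filter_offDiag_ne, offDiag_card, card_univ,
    Fintype.card_perm] at orbit_count

end PermCounting

theorem cast_eq_of_mul_eq_factorial_mul (n n₁ D : ℕ) (hn : 2 ≤ n) (h₁ : n₁ ≤ n)
    (h : D * (n * n - n) = n.factorial * (2 * n₁ * (n - n₁))) :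
    (D : ℝ) =
      2 * ((n₁ : ℝ) / n) * (1 - (n₁ : ℝ) / n) * (n.factorial : ℝ) / (1 - 1 / (n : ℝ)) := by
  have two_le : (2 : ℝ) ≤ n := by exact_mod_cast hn
  have hR : (D : ℝ) * (n * n - n) = n.factorial * (2 * n₁ * (n - n₁)) := by
    have hcast := congrArg (Nat.cast : ℕ → ℝ) h
    push_cast [Nat.cast_sub h₁, Nat.cast_sub (Nat.le_mul_self n)] at hcast
    exact hcast
  have : (n : ℝ) - 1 ≠ 0 := by linarith
  have : (n : ℝ) ≠ 0 := by linarith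
  field_simp
  linear_combination hR

theorem stmt18 (n n₁ : ℕ) (hn : 2 ≤ n) (h₁ : n₁ ≤ n) :
    ∃ X : Fin n → Fin (n.factorial) → Bool,
      (∀ j, trueCount X j = n₁) ∧
      ∀ i i' : Fin n, i ≠ i' →
        (hamming (X i) (X i') : ℝ)
          = 2 * ((n₁ : ℝ) / n) * (1 - (n₁ : ℝ) / n) * (n.factorial : ℝ)
              / (1 - 1 / (n : ℝ)) := by
  obtain ⟨A, -, hA⟩ :=
    exists_subset_card_eq (s := (univ : Finset (Fin n))) (by simpa using h₁)
  let c : Fin n → Bool := fun a => decide (a ∈ A)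
  have hT : #{a | c a = true} = n₁ := by simpa [c] using hA
  have hF : #{a | c a = false} = n - n₁ := by simp [c, filter_not, card_sdiff, hA]
  have card_perm : Fintype.card (Perm (Fin n)) = n.factorial := by
    rw [Fintype.card_perm, Fintype.card_fin]
  let e : Fin n.factorial ≃ Perm (Fin n) := (Fintype.equivFinOfCardEq card_perm).symm
  refine ⟨fun i j => c (e j i), fun j => (card_filter_perm_apply (e j) c).trans hT,
    fun i i' hii' => ?_⟩
  have hamming_eq : hamming (fun j => c (e j i)) (fun j => c (e j i')) =
      #{σ : Perm (Fin n) | c (σ i) ≠ c (σ i')} :=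
    card_equiv e fun j => by simp
  have count := Perm.card_filter_ne_mul hii' c
  rw [hT, hF, Fintype.card_fin] at count
  rw [hamming_eq]
  exact cast_eq_of_mul_eq_factorial_mul n n₁ _ hn h₁ count

end
end
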